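/- For scalars c₁, c₂, c₃ ∈ ℂ, set ω := c₁ f_{α₁}e_{α₁} + c₂ f_{α₂}e_{α₂} + c₃ f_{α₁+α₂}e_{α₁+α₂} in the quantum exterior algebra Λ. If ω³ ≠ 0 then c₁ ≠ 0; equivalently, whenever c₁ = 0 one has ω³ = 0. (Hence no nondegenerate coinvariant 2-form on Ω²_q(F₃) is central, and Ω_q(F₃) admits no covariant Kähler structure.) -/

import Mathlib

noncomputable section

namespace QFlagExt

/-- The positive roots of `sl₃`: `a1 = α₁`, `a2 = α₂`, `a12 = α₁+α₂`. -/
inductive PosRoot : Type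
  | a1 | a2 | a12
deriving DecidableEq

instance instFintypePosRoot : Fintype PosRoot :=
  ⟨{PosRoot.a1, PosRoot.a2, PosRoot.a12}, fun x => by cases x <;> decide⟩

open PosRoot

/-- Position in the convex order `α₂ < α₁+α₂ < α₁`. -/
def pos : PosRoot → ℕ
  | a2 => 0
  | a12 => 1
  | a1 => 2

/-- The symmetric bilinear form `(·,·)` on the roots of `sl₃`. -/
def ip : PosRoot → PosRoot → ℤ
  | a1, a1 => 2
  | a2, a2 => 2
  | a12, a12 => 2
  | a1, a2 => -1
  | a2, a1 => -1
  | a1, a12 => 1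
  | a12, a1 => 1
  | a2, a12 => 1
  | a12, a2 => 1

/-- Generators of the quantum exterior algebra: `e γ` and `f γ` for `γ ∈ Δ⁺`. -/
inductive LGen : Type
  | e : PosRoot → LGen
  | f : PosRoot → LGen
deriving DecidableEq, Fintype

open LGen

/-- The generators viewed inside the free algebra. -/
def ce (x : LGen) : FreeAlgebra ℂ LGen := FreeAlgebra.ι ℂ x

/-- The defining relations of the quantum exterior algebra `Λ` of the full quantum
flag manifold of `O_q(SU₃)`. -/
inductive lrel (q : ℝ) : FreeAlgebra ℂ LGen → FreeAlgebra ℂ LGen → Prop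
  | ee (β γ : PosRoot) (h : pos β ≤ pos γ) :
      lrel q (ce (e γ) * ce (e β)) ((-((q : ℂ) ^ ip β γ)) • (ce (e β) * ce (e γ)))
  | ff (β γ : PosRoot) (h : pos β ≤ pos γ) :
      lrel q (ce (f γ) * ce (f β)) ((-((q : ℂ) ^ (-ip β γ))) • (ce (f β) * ce (f γ)))
  | ef (β γ : PosRoot) (h : β ≠ γ ∨ (β = a12 ∧ γ = a12)) :
      lrel q (ce (e γ) * ce (f β)) ((-((q : ℂ) ^ ip β γ)) • (ce (f β) * ce (e γ)))
  | ef1 :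
      lrel q (ce (e a1) * ce (f a1))
        ((-((q : ℂ) ^ (2 : ℤ))) • (ce (f a1) * ce (e a1))
          - ((q : ℂ) - (q : ℂ)⁻¹) • (ce (f a12) * ce (e a12)))
  | ef2 :
      lrel q (ce (e a2) * ce (f a2))
        ((-((q : ℂ) ^ (2 : ℤ))) • (ce (f a2) * ce (e a2))
          + ((q : ℂ) - (q : ℂ)⁻¹) • (ce (f a12) * ce (e a12)))

/-- The quantum exterior algebra `Λ`. -/
abbrev Lam (q : ℝ) := RingQuot (lrel q)

/-- The generators of `Λ`. -/
def gen (q : ℝ) (x : LGen) : Lam q := RingQuot.mkAlgHom ℂ (lrel q) (ce x)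

/-- The positive roots listed in the convex order. -/
def rootList : List PosRoot := [a2, a12, a1]

/-- The ordered monomial `e_{γ₁}⋯e_{γ_a}` over the roots in `s`, in increasing convex order. -/
def emon (q : ℝ) (s : Finset PosRoot) : Lam q :=
  ((rootList.filter fun γ => decide (γ ∈ s)).map fun γ => gen q (e γ)).prod

/-- The ordered monomial `f_{δ₁}⋯f_{δ_b}` over the roots in `s`, in increasing convex order. -/
def fmon (q : ℝ) (s : Finset PosRoot) : Lam q :=
  ((rootList.filter fun γ => decide (γ ∈ s)).map fun γ => gen q (f γ)).prod

/-- The PBW monomial `f_{δ₁}⋯f_{δ_b} e_{γ₁}⋯e_{γ_a}`. -/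
def mon (q : ℝ) (p : Finset PosRoot × Finset PosRoot) : Lam q :=
  fmon q p.1 * emon q p.2

end QFlagExt

/-!
If `c₁ = 0`, then `ω` lies in `F * E`, where `F` and `E` are the spans of `f_{α₂}, f_{α₁+α₂}` and
of `e_{α₂}, e_{α₁+α₂}`. The relations give `E * F ≤ F * E`: moving such an `e` past such an `f`
never produces a generator of the root `α₁`. Hence `ω³ ∈ (F * E)³ ≤ F³ * E³`, and `F³ = 0` since
`f_{α₂}` and `f_{α₁+α₂}` square to zero and `q`-commute.
-/

namespace Submodule

variable {R A : Type*} [CommSemiring R] [Semiring A] [Algebra R A]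

theorem mul_pow_le_pow_mul {E F : Submodule R A} (h : E * F ≤ F * E) (n : ℕ) :
    E * F ^ n ≤ F ^ n * E := by
  induction n with
  | zero => simp
  | succ n ih =>
    calc E * F ^ (n + 1) = E * F * F ^ n := by rw [pow_succ', mul_assoc]
      _ ≤ F * E * F ^ n := mul_le_mul_left h _
      _ = F * (E * F ^ n) := mul_assoc _ _ _
      _ ≤ F * (F ^ n * E) := mul_le_mul_right ih _
      _ = F ^ (n + 1) * E := by rw [pow_succ', mul_assoc]

theorem mul_pow_le_pow_mul_pow {E F : Submodule R A} (h : E * F ≤ F * E) (n : ℕ) :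
    (F * E) ^ n ≤ F ^ n * E ^ n := by
  induction n with
  | zero => simp
  | succ n ih =>
    calc (F * E) ^ (n + 1) = F * (E * (F * E) ^ n) := by rw [pow_succ', mul_assoc]
      _ ≤ F * (E * (F ^ n * E ^ n)) := mul_le_mul_right (mul_le_mul_right ih _) _
      _ = F * (E * F ^ n) * E ^ n := by simp only [mul_assoc]
      _ ≤ F * (F ^ n * E) * E ^ n :=
        mul_le_mul_left (mul_le_mul_right (mul_pow_le_pow_mul h n) _) _
      _ = F ^ (n + 1) * E ^ (n + 1) := by rw [pow_succ' F, pow_succ' E]; simp only [mul_assoc]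

open Pointwise in
theorem span_pair_pow_three_eq_bot {x y : A} (c : R) (hx : x * x = 0) (hy : y * y = 0)
    (hyx : y * x = c • (x * y)) : span R {x, y} ^ 3 = ⊥ := by
  rw [span_pow, span_eq_bot]
  intro z hz
  rw [pow_succ, pow_two] at hz
  obtain ⟨_, ⟨a, ha, b, hb, rfl⟩, c', hc, rfl⟩ := hz
  simp only [Set.mem_insert_iff, Set.mem_singleton_iff] at ha hb hc
  have hx' : ∀ z, x * (x * z) = 0 := fun z => by rw [← mul_assoc, hx, zero_mul]
  rcases ha with rfl | rfl <;> rcases hb with rfl | rfl <;> rcases hc with rfl | rfl <;>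
    simp [mul_assoc, hx, hy, hyx, hx']

end Submodule

theorem eq_zero_of_eq_neg_smul {K M : Type*} [Field K] [AddCommGroup M] [Module K M] {c : K}
    {x : M} (hc : 1 + c ≠ 0) (h : x = -c • x) : x = 0 := by
  have hsum : (1 + c) • x = 0 := by
    rw [add_smul, one_smul]
    nth_rewrite 1 [h]
    module
  exact (smul_eq_zero.mp hsum).resolve_left hc

namespace QFlagExt

open PosRoot LGen

variable (q : ℝ)

theorem gen_f_mul_gen_f {β γ : PosRoot} (h : pos β ≤ pos γ) :
    gen q (f γ) * gen q (f β) = (-((q : ℂ) ^ (-ip β γ))) • (gen q (f β) * gen q (f γ)) := by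
  simpa only [gen, map_mul, map_smul] using RingQuot.mkAlgHom_rel ℂ (lrel.ff β γ h)

theorem gen_e_mul_gen_f {β γ : PosRoot} (h : β ≠ γ ∨ (β = a12 ∧ γ = a12)) :
    gen q (e γ) * gen q (f β) = (-((q : ℂ) ^ ip β γ)) • (gen q (f β) * gen q (e γ)) := by
  simpa only [gen, map_mul, map_smul] using RingQuot.mkAlgHom_rel ℂ (lrel.ef β γ h)

theorem gen_e_a2_mul_gen_f_a2 :
    gen q (e a2) * gen q (f a2) = (-((q : ℂ) ^ (2 : ℤ))) • (gen q (f a2) * gen q (e a2))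
      + ((q : ℂ) - (q : ℂ)⁻¹) • (gen q (f a12) * gen q (e a12)) := by
  simpa only [gen, map_add, map_mul, map_smul] using RingQuot.mkAlgHom_rel ℂ (lrel.ef2 (q := q))

theorem gen_f_mul_self (γ : PosRoot) : gen q (f γ) * gen q (f γ) = 0 := by
  have h := gen_f_mul_gen_f q (le_refl (pos γ))
  rw [show ip γ γ = 2 by cases γ <;> rfl] at h
  refine eq_zero_of_eq_neg_smul ?_ h
  exact_mod_cast (by positivity : (1 + q ^ (-2 : ℤ) : ℝ) ≠ 0)

def fSpan : Submodule ℂ (Lam q) := Submodule.span ℂ {gen q (f a2), gen q (f a12)}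

def eSpan : Submodule ℂ (Lam q) := Submodule.span ℂ {gen q (e a2), gen q (e a12)}

theorem fSpan_pow_three : fSpan q ^ 3 = ⊥ :=
  Submodule.span_pair_pow_three_eq_bot _ (gen_f_mul_self q a2) (gen_f_mul_self q a12)
    (gen_f_mul_gen_f q (β := a2) (γ := a12) (by decide))

theorem gen_f_mul_gen_e_mem_fSpan_mul_eSpan {β γ : PosRoot} (hβ : β ≠ a1) (hγ : γ ≠ a1) :
    gen q (f β) * gen q (e γ) ∈ fSpan q * eSpan q := by
  refine Submodule.mul_mem_mul (Submodule.subset_span ?_) (Submodule.subset_span ?_) <;>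
    cases β <;> cases γ <;> simp_all

theorem eSpan_mul_fSpan_le : eSpan q * fSpan q ≤ fSpan q * eSpan q := by
  rw [eSpan, fSpan, Submodule.span_mul_span, Submodule.span_le]
  rintro _ ⟨_, hγ, _, hβ, rfl⟩
  simp only [Set.mem_insert_iff, Set.mem_singleton_iff] at hγ hβ
  have hFE {β γ : PosRoot} (c : ℂ) (hβ : β ≠ a1) (hγ : γ ≠ a1) :
      c • (gen q (f β) * gen q (e γ)) ∈ fSpan q * eSpan q :=
    Submodule.smul_mem _ c (gen_f_mul_gen_e_mem_fSpan_mul_eSpan q hβ hγ)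
  dsimp only
  rcases hγ with rfl | rfl <;> rcases hβ with rfl | rfl
  · rw [gen_e_a2_mul_gen_f_a2]
    exact add_mem (hFE _ (by decide) (by decide)) (hFE _ (by decide) (by decide))
  all_goals
    rw [gen_e_mul_gen_f q (by decide)]
    exact hFE _ (by decide) (by decide)

theorem pow_three_eq_zero_of_mem_fSpan_mul_eSpan {ω : Lam q} (hω : ω ∈ fSpan q * eSpan q) :
    ω ^ 3 = 0 := by
  have h :=
    Submodule.mul_pow_le_pow_mul_pow (eSpan_mul_fSpan_le q) 3 (Submodule.pow_mem_pow _ hω 3)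
  rwa [fSpan_pow_three, Submodule.bot_mul, Submodule.mem_bot] at h

theorem nondegenerate_needs_c1_general (q : ℝ) (c1 c2 c3 : ℂ) :
    (c1 • (gen q (f a1) * gen q (e a1))
      + c2 • (gen q (f a2) * gen q (e a2))
      + c3 • (gen q (f a12) * gen q (e a12))) ^ 3 ≠ 0 → c1 ≠ 0 := by
  intro hω hc1
  apply hω
  rw [hc1, zero_smul, zero_add]
  exact pow_three_eq_zero_of_mem_fSpan_mul_eSpan q <| add_mem
    (Submodule.smul_mem _ _ (gen_f_mul_gen_e_mem_fSpan_mul_eSpan q (by decide) (by decide)))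
    (Submodule.smul_mem _ _ (gen_f_mul_gen_e_mem_fSpan_mul_eSpan q (by decide) (by decide)))

theorem nondegenerate_needs_c1 (q : ℝ) (hq0 : 0 < q) (hq1 : q < 1) (c1 c2 c3 : ℂ) :
    (c1 • (gen q (f a1) * gen q (e a1))
      + c2 • (gen q (f a2) * gen q (e a2))
      + c3 • (gen q (f a12) * gen q (e a12))) ^ 3 ≠ 0 → c1 ≠ 0 :=
  nondegenerate_needs_c1_general q c1 c2 c3

end QFlagExt
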